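/- arXiv:1306.4599 — 7 statements merged into one kernel-verified Lean document; each statement's English description precedes it below -/
import Mathlib

section
/- Let A be a ring, B an A-algebra, A' an A-algebra with a surjective ring homomorphism A' → A having nilpotent kernel. If the structure map A → B is integral (equivalently, if B is integral over A), then the fiber product ring B' = B ×_A A' is integral over A; in particular the inclusion B' ⊆ B × A' is an integral ring extension. -/
theorem IsNilpotent.isIntegral {R A : Type*} [CommRing R] [Ring A] [Algebra R A] {x : A}
    (hx : IsNilpotent x) : IsIntegral R x := by
  obtain ⟨n, hn⟩ := hx
  exact ⟨Polynomial.X ^ n, Polynomial.monic_X_pow n, by simp [hn]⟩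

/-- Every `a'` differs from `algebraMap (f a')` by an element of the nilpotent ideal `ker f`. -/
theorem Algebra.IsIntegral.of_isNilpotent_ker {R A : Type*} [CommRing R] [CommRing A]
    [Algebra R A] (f : A →ₐ[R] R) (hker : IsNilpotent (RingHom.ker (f : A →+* R))) :
    Algebra.IsIntegral R A := by
  obtain ⟨n, hn⟩ := hker
  refine ⟨fun a ↦ ?_⟩
  have hmem : a - algebraMap R A (f a) ∈ RingHom.ker (f : A →+* R) := by
    simp [RingHom.mem_ker]
  have hnil : IsNilpotent (a - algebraMap R A (f a)) :=
    ⟨n, Ideal.pow_eq_zero_of_mem hn le_rfl hmem⟩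
  simpa using hnil.isIntegral.add (isIntegral_algebraMap (x := f a))

theorem statement_0_general {A B A' : Type} [CommRing A] [CommRing B] [CommRing A']
    [Algebra A B] [Algebra A A']
    (g : B →ₐ[A] A) (f : A' →ₐ[A] A)
    (hker : IsNilpotent (RingHom.ker (f : A' →+* A)))
    (hint : Algebra.IsIntegral A B) :
    Algebra.IsIntegral A
      (AlgHom.equalizer (g.comp (AlgHom.fst A B A')) (f.comp (AlgHom.snd A B A'))) ∧
    Algebra.IsIntegral
      (AlgHom.equalizer (g.comp (AlgHom.fst A B A')) (f.comp (AlgHom.snd A B A')))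
      (B × A') := by
  have : Algebra.IsIntegral A A' := .of_isNilpotent_ker f hker
  set B' := AlgHom.equalizer (g.comp (AlgHom.fst A B A')) (f.comp (AlgHom.snd A B A'))
  exact ⟨.of_injective B'.val Subtype.val_injective, .tower_top A⟩

theorem statement_0 {A B A' : Type} [CommRing A] [CommRing B] [CommRing A']
    [Algebra A B] [Algebra A A']
    (g : B →ₐ[A] A) (f : A' →ₐ[A] A)
    (hf : Function.Surjective f)
    (hker : IsNilpotent (RingHom.ker (f : A' →+* A)))
    (hint : Algebra.IsIntegral A B) :
    Algebra.IsIntegral A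
      (AlgHom.equalizer (g.comp (AlgHom.fst A B A')) (f.comp (AlgHom.snd A B A'))) ∧
    Algebra.IsIntegral
      (AlgHom.equalizer (g.comp (AlgHom.fst A B A')) (f.comp (AlgHom.snd A B A')))
      (B × A') :=
  statement_0_general g f hker hint
end

section
/- Let A be a ring, and let A → B and B → C be integral ring homomorphisms. Then the homomorphism B → C can be written as a filtered colimit of homomorphisms B_λ → C_λ of A-algebras where each B_λ and C_λ is a finite A-algebra of finite presentation (as an A-algebra), with colimit B → C. -/
/-!
Index the system by finite presentations `A[s]/I`: `s` a finite set of elements of `B`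
(resp. `C`) and `I` a finitely generated ideal of relations that hold in `B` (resp. `C`)
such that `A[s]/I` is module-finite, with `g` carrying generators to generators and relations
into relations. Integrality makes every element a generator (take its monic equation as
relation), two indices have a common refinement (take unions of generators and relations),
and a class of `A[s]/I` that vanishes in `B` or `C` is killed by adding one relation; these are
directedness, joint surjectivity and eventual injectivity.
-/

/-- A presentation of an `A`-algebra homomorphism `g : B → C` as a filtered (directed)
colimit of homomorphisms `B_λ → C_λ` of finite and finitely presented `A`-algebras.
The colimit condition is expressed by compatible maps to `B` and `C` which are jointly
surjective and eventually injective. -/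
structure IntegralApproxSystem (A B C : Type) [CommRing A] [CommRing B] [CommRing C]
    [Algebra A B] [Algebra A C] (g : B →ₐ[A] C) where
  ι : Type
  [pre : Preorder ι]
  directed : IsDirected ι (· ≤ ·)
  ne : Nonempty ι
  Bo : ι → Type
  Co : ι → Type
  [ringB : ∀ i, CommRing (Bo i)]
  [ringC : ∀ i, CommRing (Co i)]
  [algB : ∀ i, Algebra A (Bo i)]
  [algC : ∀ i, Algebra A (Co i)]
  finB : ∀ i, Module.Finite A (Bo i)
  fpB : ∀ i, Algebra.FinitePresentation A (Bo i)
  finC : ∀ i, Module.Finite A (Co i)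
  fpC : ∀ i, Algebra.FinitePresentation A (Co i)
  gl : ∀ i, Bo i →ₐ[A] Co i
  tB : ∀ i j, i ≤ j → (Bo i →ₐ[A] Bo j)
  tC : ∀ i j, i ≤ j → (Co i →ₐ[A] Co j)
  tB_id : ∀ i, tB i i le_rfl = AlgHom.id A (Bo i)
  tC_id : ∀ i, tC i i le_rfl = AlgHom.id A (Co i)
  tB_comp : ∀ i j k (hij : i ≤ j) (hjk : j ≤ k),
    (tB j k hjk).comp (tB i j hij) = tB i k (hij.trans hjk)
  tC_comp : ∀ i j k (hij : i ≤ j) (hjk : j ≤ k),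
    (tC j k hjk).comp (tC i j hij) = tC i k (hij.trans hjk)
  square : ∀ i j (hij : i ≤ j), (gl j).comp (tB i j hij) = (tC i j hij).comp (gl i)
  toB : ∀ i, Bo i →ₐ[A] B
  toC : ∀ i, Co i →ₐ[A] C
  toB_comp : ∀ i j (hij : i ≤ j), (toB j).comp (tB i j hij) = toB i
  toC_comp : ∀ i j (hij : i ≤ j), (toC j).comp (tC i j hij) = toC i
  compat : ∀ i, g.comp (toB i) = (toC i).comp (gl i)
  jointly_surjB : ∀ b : B, ∃ i, b ∈ (toB i).range
  jointly_surjC : ∀ c : C, ∃ i, c ∈ (toC i).range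
  eventually_eqB : ∀ i (x y : Bo i), toB i x = toB i y →
    ∃ j, ∃ hij : i ≤ j, tB i j hij x = tB i j hij y
  eventually_eqC : ∀ i (x y : Co i), toC i x = toC i y →
    ∃ j, ∃ hij : i ≤ j, tC i j hij x = tC i j hij y

open MvPolynomial

namespace MvPolynomial

variable {A : Type*} [CommRing A]

theorem finite_quotient_of_isIntegral_mk_X {σ : Type*} [Finite σ]
    (I : Ideal (MvPolynomial σ A)) (h : ∀ i, IsIntegral A (Ideal.Quotient.mk I (X i))) :
    Module.Finite A (MvPolynomial σ A ⧸ I) := by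
  have hadj : Algebra.adjoin A (Set.range fun i => Ideal.Quotient.mk I (X i)) = ⊤ := by
    have : (Set.range fun i => Ideal.Quotient.mk I (X i)) =
        Ideal.Quotient.mkₐ A I '' Set.range X := by
      rw [← Set.range_comp]; rfl
    rw [this, ← AlgHom.map_adjoin, adjoin_range_X, Algebra.map_top, AlgHom.range_eq_top]
    exact Ideal.Quotient.mkₐ_surjective A I
  refine ⟨?_⟩
  rw [← Algebra.top_toSubmodule, ← hadj]
  exact fg_adjoin_of_finite (Set.finite_range _) (by rintro _ ⟨i, rfl⟩; exact h i)

theorem rename_inclusion_self {R : Type*} {s : Set R} (h : s ⊆ s)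
    (p : MvPolynomial s A) : rename (Set.inclusion h) p = p := by
  rw [Set.inclusion_eq_id, rename_id_apply]

theorem aeval_rename_inclusion {R : Type*} [CommRing R] [Algebra A R] {s t : Set R} (h : s ⊆ t)
    (p : MvPolynomial s A) :
    aeval ((↑) : t → R) (rename (Set.inclusion h) p) = aeval (↑) p := by
  rw [aeval_rename]
  rfl

theorem aeval_rename_restrict {R S : Type*} [CommRing R] [CommRing S] [Algebra A R] [Algebra A S]
    (f : R →ₐ[A] S) {s : Set R} {t : Set S} (h : Set.MapsTo f s t) (p : MvPolynomial s A) :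
    aeval ((↑) : t → S) (rename (Set.MapsTo.restrict f _ _ h) p) = f (aeval (↑) p) := by
  rw [aeval_rename, comp_aeval_apply]
  rfl

theorem span_singleton_aeval_X_le_comap_rename {σ τ : Type*} {p : Polynomial A}
    {u : σ} {v : τ} (φ : σ → τ) (h : φ u = v) :
    Ideal.span {Polynomial.aeval (X u : MvPolynomial σ A) p} ≤
      (Ideal.span {Polynomial.aeval (X v : MvPolynomial τ A) p}).comap (rename φ) := by
  rw [Ideal.span_le, Set.singleton_subset_iff, SetLike.mem_coe, Ideal.mem_comap,
    ← Polynomial.aeval_algHom_apply, rename_X, h]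
  exact Ideal.subset_span rfl

end MvPolynomial

structure FiniteApprox (A R : Type) [CommRing A] [CommRing R] [Algebra A R] where
  gens : Set R
  finite_gens : gens.Finite
  rels : Ideal (MvPolynomial gens A)
  fg_rels : rels.FG
  rels_le_ker : rels ≤ RingHom.ker (aeval ((↑) : gens → R))
  finite : Module.Finite A (MvPolynomial gens A ⧸ rels)

namespace FiniteApprox

variable {A R : Type} [CommRing A] [CommRing R] [Algebra A R]

abbrev Presented (a : FiniteApprox A R) : Type := MvPolynomial a.gens A ⧸ a.rels

instance (a : FiniteApprox A R) : Module.Finite A a.Presented := a.finite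

instance (a : FiniteApprox A R) : Algebra.FinitePresentation A a.Presented :=
  have : Finite a.gens := a.finite_gens.to_subtype
  .quotient a.fg_rels

noncomputable def eval (a : FiniteApprox A R) : a.Presented →ₐ[A] R :=
  Ideal.Quotient.liftₐ a.rels (aeval (↑)) fun _ hp => a.rels_le_ker hp

@[simp]
theorem eval_mk (a : FiniteApprox A R) (p : MvPolynomial a.gens A) :
    a.eval (Ideal.Quotient.mk a.rels p) = aeval (↑) p :=
  rfl

theorem algHom_ext {a : FiniteApprox A R} {S : Type} [CommRing S] [Algebra A S]
    {f f' : a.Presented →ₐ[A] S}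
    (h : ∀ x, f (Ideal.Quotient.mk a.rels (X x)) = f' (Ideal.Quotient.mk a.rels (X x))) :
    f = f' :=
  Ideal.Quotient.algHom_ext A (MvPolynomial.algHom_ext h)

instance : Preorder (FiniteApprox A R) where
  le a b := ∃ h : a.gens ⊆ b.gens, a.rels ≤ b.rels.comap (rename (Set.inclusion h))
  le_refl a := ⟨subset_rfl, fun p hp => by
    rwa [Ideal.mem_comap, rename_inclusion_self]⟩
  le_trans a b c := fun ⟨hab, hab'⟩ ⟨hbc, hbc'⟩ => ⟨hab.trans hbc, fun p hp => by
    simpa only [Ideal.mem_comap, rename_rename, Set.inclusion_comp_inclusion] using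
      hbc' (hab' hp)⟩

noncomputable def transition {a b : FiniteApprox A R} (h : a ≤ b) :
    a.Presented →ₐ[A] b.Presented :=
  Ideal.quotientMapₐ b.rels (rename (Set.inclusion h.fst)) h.snd

@[simp]
theorem transition_mk {a b : FiniteApprox A R} (h : a ≤ b) (p : MvPolynomial a.gens A) :
    transition h (Ideal.Quotient.mk a.rels p) =
      Ideal.Quotient.mk b.rels (rename (Set.inclusion h.fst) p) :=
  rfl

theorem transition_refl {a : FiniteApprox A R} (h : a ≤ a) : transition h = AlgHom.id A _ :=
  algHom_ext fun _ => by simp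

theorem transition_comp_transition {a b c : FiniteApprox A R} (hab : a ≤ b) (hbc : b ≤ c) :
    (transition hbc).comp (transition hab) = transition (hab.trans hbc) :=
  algHom_ext fun _ => by simp

theorem eval_comp_transition {a b : FiniteApprox A R} (h : a ≤ b) :
    b.eval.comp (transition h) = a.eval :=
  algHom_ext fun _ => by simp

theorem rels_le_comap_ker (a : FiniteApprox A R) {s : Set R} (h : a.gens ⊆ s) :
    a.rels ≤ (RingHom.ker (aeval ((↑) : s → R))).comap (rename (Set.inclusion h)) :=
  fun p hp => by
  simpa only [Ideal.mem_comap, RingHom.mem_ker, aeval_rename_inclusion] using a.rels_le_ker hp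

theorem isIntegral_mk_X_inclusion (a : FiniteApprox A R) {s : Set R} (h : a.gens ⊆ s)
    {I : Ideal (MvPolynomial s A)} (hI : a.rels ≤ I.comap (rename (Set.inclusion h)))
    (x : a.gens) :
    IsIntegral A (Ideal.Quotient.mk I (X (Set.inclusion h x))) := by
  simpa using (Algebra.IsIntegral.isIntegral (R := A) (Ideal.Quotient.mk a.rels (X x))).map
    (Ideal.quotientMapₐ I (rename (Set.inclusion h)) hI)

noncomputable def sup (a b : FiniteApprox A R) : FiniteApprox A R where
  gens := a.gens ∪ b.gens
  finite_gens := a.finite_gens.union b.finite_gens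
  rels := a.rels.map (rename (Set.inclusion Set.subset_union_left)) ⊔
    b.rels.map (rename (Set.inclusion Set.subset_union_right))
  fg_rels := Submodule.FG.sup (a.fg_rels.map _) (b.fg_rels.map _)
  rels_le_ker := sup_le (Ideal.map_le_iff_le_comap.2 (a.rels_le_comap_ker _))
    (Ideal.map_le_iff_le_comap.2 (b.rels_le_comap_ker _))
  finite := by
    have : Finite ↥(a.gens ∪ b.gens) := (a.finite_gens.union b.finite_gens).to_subtype
    refine finite_quotient_of_isIntegral_mk_X _ fun ⟨x, hx⟩ =>
      hx.elim (fun hx => ?_) fun hx => ?_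
    · exact a.isIntegral_mk_X_inclusion _ (Ideal.map_le_iff_le_comap.1 le_sup_left) ⟨x, hx⟩
    · exact b.isIntegral_mk_X_inclusion _ (Ideal.map_le_iff_le_comap.1 le_sup_right) ⟨x, hx⟩

theorem le_sup_left (a b : FiniteApprox A R) : a ≤ a.sup b :=
  ⟨Set.subset_union_left, Ideal.map_le_iff_le_comap.1 _root_.le_sup_left⟩

theorem le_sup_right (a b : FiniteApprox A R) : b ≤ a.sup b :=
  ⟨Set.subset_union_right, Ideal.map_le_iff_le_comap.1 _root_.le_sup_right⟩

noncomputable def empty : FiniteApprox A R where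
  gens := ∅
  finite_gens := Set.finite_empty
  rels := ⊥
  fg_rels := Submodule.fg_bot
  rels_le_ker := bot_le
  finite := finite_quotient_of_isIntegral_mk_X _ fun x => x.2.elim

noncomputable def ofRoot (x : R) (p : Polynomial A) (hp : p.Monic) (hx : Polynomial.aeval x p = 0) :
    FiniteApprox A R where
  gens := {x}
  finite_gens := Set.finite_singleton x
  rels := Ideal.span {Polynomial.aeval (X ⟨x, rfl⟩) p}
  fg_rels := Submodule.fg_span_singleton _
  rels_le_ker := by
    rw [Ideal.span_le, Set.singleton_subset_iff, SetLike.mem_coe, RingHom.mem_ker,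
      ← Polynomial.aeval_algHom_apply, aeval_X]
    exact hx
  finite := finite_quotient_of_isIntegral_mk_X _ fun ⟨_, rfl⟩ => ⟨p, hp, by
    rw [← Polynomial.aeval_def, ← Ideal.Quotient.mkₐ_eq_mk A, Polynomial.aeval_algHom_apply,
      Ideal.Quotient.mkₐ_eq_mk, Ideal.Quotient.eq_zero_iff_mem]
    exact Ideal.subset_span rfl⟩

theorem mem_range_eval_ofRoot (x : R) (p : Polynomial A) (hp : p.Monic)
    (hx : Polynomial.aeval x p = 0) : x ∈ (ofRoot x p hp hx).eval.range :=
  ⟨Ideal.Quotient.mk _ (X ⟨x, rfl⟩), by simp⟩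

noncomputable def addRel (a : FiniteApprox A R) (d : MvPolynomial a.gens A)
    (hd : aeval ((↑) : a.gens → R) d = 0) : FiniteApprox A R where
  gens := a.gens
  finite_gens := a.finite_gens
  rels := a.rels ⊔ Ideal.span {d}
  fg_rels := Submodule.FG.sup a.fg_rels (Submodule.fg_span_singleton d)
  rels_le_ker := sup_le a.rels_le_ker (Ideal.span_le.2 (Set.singleton_subset_iff.2 hd))
  finite := Module.Finite.of_surjective (Ideal.Quotient.factorₐ A _root_.le_sup_left).toLinearMap
    (Ideal.Quotient.factor_surjective _root_.le_sup_left)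

theorem le_addRel (a : FiniteApprox A R) {d : MvPolynomial a.gens A}
    (hd : aeval ((↑) : a.gens → R) d = 0) : a ≤ a.addRel d hd :=
  ⟨Set.Subset.rfl, fun p hp =>
    show rename (Set.inclusion Set.Subset.rfl) p ∈ a.rels ⊔ Ideal.span {d} by
      rw [rename_inclusion_self]
      exact Ideal.mem_sup_left hp⟩

theorem transition_addRel_mk_eq (a : FiniteApprox A R) {p q : MvPolynomial a.gens A}
    (hd : aeval ((↑) : a.gens → R) (p - q) = 0) :
    transition (a.le_addRel hd) (Ideal.Quotient.mk _ p) =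
      transition (a.le_addRel hd) (Ideal.Quotient.mk _ q) := by
  rw [← sub_eq_zero, ← map_sub, ← map_sub, transition_mk]
  change Ideal.Quotient.mk (a.rels ⊔ Ideal.span {p - q})
    (rename (Set.inclusion Set.Subset.rfl) (p - q)) = 0
  rw [rename_inclusion_self, Ideal.Quotient.eq_zero_iff_mem]
  exact Ideal.mem_sup_right (Ideal.subset_span rfl)

end FiniteApprox

structure FiniteApproxHom {A B C : Type} [CommRing A] [CommRing B] [CommRing C]
    [Algebra A B] [Algebra A C] (g : B →ₐ[A] C) where
  src : FiniteApprox A B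
  tgt : FiniteApprox A C
  mapsTo : Set.MapsTo g src.gens tgt.gens
  rels_le : src.rels ≤ tgt.rels.comap (rename (Set.MapsTo.restrict g _ _ mapsTo))

namespace FiniteApproxHom

variable {A B C : Type} [CommRing A] [CommRing B] [CommRing C] [Algebra A B] [Algebra A C]
  {g : B →ₐ[A] C}

noncomputable def hom (i : FiniteApproxHom g) : i.src.Presented →ₐ[A] i.tgt.Presented :=
  Ideal.quotientMapₐ i.tgt.rels (rename (Set.MapsTo.restrict g _ _ i.mapsTo)) i.rels_le

@[simp]
theorem hom_mk (i : FiniteApproxHom g) (p : MvPolynomial i.src.gens A) :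
    i.hom (Ideal.Quotient.mk _ p) =
      Ideal.Quotient.mk _ (rename (Set.MapsTo.restrict g _ _ i.mapsTo) p) :=
  rfl

theorem eval_comp_hom (i : FiniteApproxHom g) : i.tgt.eval.comp i.hom = g.comp i.src.eval :=
  FiniteApprox.algHom_ext fun _ => by simp

instance : Preorder (FiniteApproxHom g) := Preorder.lift fun i => (i.src, i.tgt)

theorem le_iff {i j : FiniteApproxHom g} : i ≤ j ↔ i.src ≤ j.src ∧ i.tgt ≤ j.tgt :=
  Iff.rfl

theorem hom_comp_transition {i j : FiniteApproxHom g} (h : i ≤ j) :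
    j.hom.comp (FiniteApprox.transition h.1) = (FiniteApprox.transition h.2).comp i.hom :=
  FiniteApprox.algHom_ext fun _ => by simp; rfl

theorem rels_le_comap_rename_restrict (i : FiniteApproxHom g) {s : Set B} {t : Set C}
    (hs : i.src.gens ⊆ s) (ht : i.tgt.gens ⊆ t) (h : Set.MapsTo g s t)
    {J : Ideal (MvPolynomial t A)} (hJ : i.tgt.rels ≤ J.comap (rename (Set.inclusion ht))) :
    i.src.rels ≤
      (J.comap (rename (Set.MapsTo.restrict g s t h))).comap (rename (Set.inclusion hs)) :=
  fun p hp => by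
    have := hJ (i.rels_le hp)
    simp only [Ideal.mem_comap, rename_rename] at this ⊢
    exact this

noncomputable def sup (i j : FiniteApproxHom g) : FiniteApproxHom g where
  src := i.src.sup j.src
  tgt := i.tgt.sup j.tgt
  mapsTo := i.mapsTo.union_union j.mapsTo
  rels_le := sup_le
    (Ideal.map_le_iff_le_comap.2 <| i.rels_le_comap_rename_restrict _ _ _ <|
      Ideal.map_le_iff_le_comap.1 le_sup_left)
    (Ideal.map_le_iff_le_comap.2 <| j.rels_le_comap_rename_restrict _ _ _ <|
      Ideal.map_le_iff_le_comap.1 le_sup_right)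

theorem le_sup_left (i j : FiniteApproxHom g) : i ≤ i.sup j :=
  ⟨FiniteApprox.le_sup_left _ _, FiniteApprox.le_sup_left _ _⟩

theorem le_sup_right (i j : FiniteApproxHom g) : j ≤ i.sup j :=
  ⟨FiniteApprox.le_sup_right _ _, FiniteApprox.le_sup_right _ _⟩

noncomputable def ofRoot (b : B) (p : Polynomial A) (hp : p.Monic) (hb : Polynomial.aeval b p = 0) :
    FiniteApproxHom g where
  src := .ofRoot b p hp hb
  tgt := .ofRoot (g b) p hp (by rw [Polynomial.aeval_algHom_apply, hb, map_zero])
  mapsTo x (hx : x = b) := (congrArg g hx : g x = g b)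
  rels_le := span_singleton_aeval_X_le_comap_rename _ rfl

noncomputable def ofTgt (t : FiniteApprox A C) : FiniteApproxHom g where
  src := .empty
  tgt := t
  mapsTo := Set.mapsTo_empty _ _
  rels_le := bot_le

noncomputable def addSrcRel (i : FiniteApproxHom g) (d : MvPolynomial i.src.gens A)
    (hd : aeval ((↑) : i.src.gens → B) d = 0) : FiniteApproxHom g where
  src := i.src.addRel d hd
  tgt := i.tgt.addRel (rename (Set.MapsTo.restrict g _ _ i.mapsTo) d)
    (by rw [aeval_rename_restrict g i.mapsTo, hd, map_zero])
  mapsTo := i.mapsTo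
  rels_le := sup_le (i.rels_le.trans (Ideal.comap_mono _root_.le_sup_left)) <|
    Ideal.span_le.2 <| Set.singleton_subset_iff.2 <| Ideal.mem_sup_right (Ideal.subset_span rfl)

theorem le_addSrcRel (i : FiniteApproxHom g) {d : MvPolynomial i.src.gens A}
    (hd : aeval ((↑) : i.src.gens → B) d = 0) : i ≤ i.addSrcRel d hd :=
  le_iff.2 ⟨i.src.le_addRel hd,
    i.tgt.le_addRel (by rw [aeval_rename_restrict g i.mapsTo, hd, map_zero])⟩

noncomputable def addTgtRel (i : FiniteApproxHom g) (d : MvPolynomial i.tgt.gens A)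
    (hd : aeval ((↑) : i.tgt.gens → C) d = 0) : FiniteApproxHom g where
  src := i.src
  tgt := i.tgt.addRel d hd
  mapsTo := i.mapsTo
  rels_le := i.rels_le.trans (Ideal.comap_mono _root_.le_sup_left)

theorem le_addTgtRel (i : FiniteApproxHom g) {d : MvPolynomial i.tgt.gens A}
    (hd : aeval ((↑) : i.tgt.gens → C) d = 0) : i ≤ i.addTgtRel d hd :=
  le_iff.2 ⟨le_rfl, i.tgt.le_addRel hd⟩

theorem exists_transition_src_eq (i : FiniteApproxHom g) {x y : i.src.Presented}
    (h : i.src.eval x = i.src.eval y) :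
    ∃ j, ∃ hij : i ≤ j,
      FiniteApprox.transition hij.1 x = FiniteApprox.transition hij.1 y := by
  obtain ⟨p, rfl⟩ := Ideal.Quotient.mk_surjective x
  obtain ⟨q, rfl⟩ := Ideal.Quotient.mk_surjective y
  have hd : aeval ((↑) : i.src.gens → B) (p - q) = 0 := by
    rw [map_sub, ← FiniteApprox.eval_mk, ← FiniteApprox.eval_mk, h, sub_self]
  exact ⟨_, i.le_addSrcRel hd, i.src.transition_addRel_mk_eq hd⟩

theorem exists_transition_tgt_eq (i : FiniteApproxHom g) {x y : i.tgt.Presented}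
    (h : i.tgt.eval x = i.tgt.eval y) :
    ∃ j, ∃ hij : i ≤ j,
      FiniteApprox.transition hij.2 x = FiniteApprox.transition hij.2 y := by
  obtain ⟨p, rfl⟩ := Ideal.Quotient.mk_surjective x
  obtain ⟨q, rfl⟩ := Ideal.Quotient.mk_surjective y
  have hd : aeval ((↑) : i.tgt.gens → C) (p - q) = 0 := by
    rw [map_sub, ← FiniteApprox.eval_mk, ← FiniteApprox.eval_mk, h, sub_self]
  exact ⟨_, i.le_addTgtRel hd, i.tgt.transition_addRel_mk_eq hd⟩

theorem exists_mem_range_src_eval {b : B} (hb : IsIntegral A b) :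
    ∃ i : FiniteApproxHom g, b ∈ i.src.eval.range :=
  let ⟨p, hp, hpb⟩ := hb
  ⟨ofRoot b p hp hpb, FiniteApprox.mem_range_eval_ofRoot b p hp hpb⟩

theorem exists_mem_range_tgt_eval {c : C} (hc : IsIntegral A c) :
    ∃ i : FiniteApproxHom g, c ∈ i.tgt.eval.range :=
  let ⟨p, hp, hpc⟩ := hc
  ⟨ofTgt (.ofRoot c p hp hpc), FiniteApprox.mem_range_eval_ofRoot c p hp hpc⟩

noncomputable def integralApproxSystem (hB : ∀ b : B, IsIntegral A b)
    (hC : ∀ c : C, IsIntegral A c) : IntegralApproxSystem A B C g where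
  ι := FiniteApproxHom g
  directed := ⟨fun i j => ⟨i.sup j, i.le_sup_left j, i.le_sup_right j⟩⟩
  ne := ⟨ofTgt .empty⟩
  Bo i := i.src.Presented
  Co i := i.tgt.Presented
  finB _ := inferInstance
  fpB _ := inferInstance
  finC _ := inferInstance
  fpC _ := inferInstance
  gl := hom
  tB _ _ h := FiniteApprox.transition h.1
  tC _ _ h := FiniteApprox.transition h.2
  tB_id _ := FiniteApprox.transition_refl _
  tC_id _ := FiniteApprox.transition_refl _
  tB_comp _ _ _ _ _ := FiniteApprox.transition_comp_transition _ _
  tC_comp _ _ _ _ _ := FiniteApprox.transition_comp_transition _ _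
  square _ _ := hom_comp_transition
  toB i := i.src.eval
  toC i := i.tgt.eval
  toB_comp _ _ h := FiniteApprox.eval_comp_transition h.1
  toC_comp _ _ h := FiniteApprox.eval_comp_transition h.2
  compat i := i.eval_comp_hom.symm
  jointly_surjB b := exists_mem_range_src_eval (hB b)
  jointly_surjC c := exists_mem_range_tgt_eval (hC c)
  eventually_eqB i _ _ := i.exists_transition_src_eq
  eventually_eqC i _ _ := i.exists_transition_tgt_eq

end FiniteApproxHom

theorem statement_2 {A B C : Type} [CommRing A] [CommRing B] [CommRing C]
    [Algebra A B] [Algebra A C] (g : B →ₐ[A] C)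
    (hB : Algebra.IsIntegral A B) (hC : (g : B →+* C).IsIntegral) :
    Nonempty (IntegralApproxSystem A B C g) := by
  have hAC : (algebraMap A C).IsIntegral := by
    rw [← g.comp_algebraMap]
    exact RingHom.IsIntegral.trans _ _ hB.isIntegral hC
  exact ⟨FiniteApproxHom.integralApproxSystem hB.isIntegral hAC⟩
end

section
/- Let A be a noetherian ring and F : Mod_A → Ab an additive, half-exact functor commuting with filtered colimits such that F(M) is a finitely generated A-module for every finitely generated A-module M (boundedness). If F(κ(t)) = 0 for every maximal ideal t of A (where κ(t) = A/t), then F(M) = 0 for all A-modules M. -/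
/-!
Statement 5 (Ogus–Bergman Nakayama lemma for half-exact functors):
Let `A` be a noetherian ring and `F : Mod_A → Ab` an additive, half-exact functor
commuting with filtered colimits such that `F(M)` is a finitely generated `A`-module for
every finitely generated `A`-module `M`.  (Such a functor, together with the canonical
`A`-module structure on its values, is encoded as an additive `A`-linear functor
`ModuleCat A ⥤ ModuleCat A`.)  If `F(A/m) = 0` for every maximal ideal `m` of `A`, then
`F(M) = 0` for all `A`-modules `M`.
-/

open CategoryTheory Limits

/-- A functor on modules is half-exact if it preserves exactness in the middle of
short exact sequences. -/
def IsHalfExact {A : Type} [CommRing A] (F : ModuleCat A ⥤ ModuleCat A) : Prop :=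
  ∀ (M N P : ModuleCat A) (f : M ⟶ N) (g : N ⟶ P),
    Function.Injective f → Function.Surjective g → Function.Exact f g →
      Function.Exact (F.map f) (F.map g)

/-!
Dévissage reduces the vanishing of `F` on finitely generated modules to the vanishing of
`F(A/p)` for the primes `p` involved, and filtered colimits extend it to all modules. For a
prime `p` we argue by noetherian induction, downwards from the maximal ideals: if `F(A/p) ≠ 0`,
choose a maximal `m` containing its annihilator (which contains `p`) and `t ∈ m \ p`.
Multiplication by `t` is injective on `A/p` and its cokernel only involves primes strictly
above `p`, so half-exactness makes `t` act surjectively on the finitely generated module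
`F(A/p)`, and Nakayama gives `1 ∈ Ann F(A/p) + (t) ⊆ m`.
-/

universe u v

theorem Module.annihilator_sup_span_singleton_eq_top_of_surjective_smul {A N : Type*}
    [CommRing A] [AddCommGroup N] [Module A N] [Module.Finite A N] {t : A}
    (ht : Function.Surjective fun n : N => t • n) :
    Module.annihilator A N ⊔ Ideal.span {t} = ⊤ := by
  have hle : (⊤ : Submodule A N) ≤ Ideal.span {t} • ⊤ := by
    rintro n -
    obtain ⟨n', rfl⟩ := ht n
    exact Submodule.smul_mem_smul (Ideal.mem_span_singleton_self t) Submodule.mem_top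
  obtain ⟨r, hr1, hr0⟩ := Submodule.exists_sub_one_mem_and_smul_eq_zero_of_fg_of_le_smul
    (Ideal.span {t}) ⊤ (Module.Finite.fg_top) hle
  have hr : r ∈ Module.annihilator A N :=
    Module.mem_annihilator.mpr fun n => hr0 n Submodule.mem_top
  rw [Ideal.eq_top_iff_one]
  simpa using Submodule.sub_mem _ (Submodule.mem_sup_left hr) (Submodule.mem_sup_right hr1)

theorem Module.annihilator_sup_span_singleton_le_annihilator_quotient_range {A M : Type*}
    [CommRing A] [AddCommGroup M] [Module A M] (t : A) :
    Module.annihilator A M ⊔ Ideal.span {t} ≤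
      Module.annihilator A (M ⧸ LinearMap.range (t • LinearMap.id : M →ₗ[A] M)) := by
  refine sup_le ((Submodule.mkQ _).annihilator_le_of_surjective (Submodule.mkQ_surjective _))
    ((Ideal.span_singleton_le_iff_mem _).mpr (Module.mem_annihilator.mpr fun c => ?_))
  obtain ⟨m, rfl⟩ := Submodule.mkQ_surjective _ c
  rw [← map_smul, Submodule.mkQ_apply, Submodule.Quotient.mk_eq_zero]
  exact ⟨m, rfl⟩

theorem CategoryTheory.Functor.annihilator_le_annihilator_obj {A : Type*} [CommRing A]
    (F : ModuleCat A ⥤ ModuleCat A) [F.Linear A] (M : ModuleCat A) :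
    Module.annihilator A M ≤ Module.annihilator A (F.obj M) := by
  intro a ha
  have hzero : a • 𝟙 M = (0 : A) • 𝟙 M := by
    ext m
    simpa using Module.mem_annihilator.mp ha m
  have hFzero : a • 𝟙 (F.obj M) = 0 := by
    rw [← F.map_id, ← F.map_smul, hzero, F.map_smul, zero_smul]
  exact Module.mem_annihilator.mpr fun y => congr($hFzero y)

theorem CategoryTheory.Functor.isZero_obj_of_subsingleton {A : Type*} [CommRing A]
    (F : ModuleCat A ⥤ ModuleCat A) [F.Linear A] (M : ModuleCat A) [Subsingleton M] :
    IsZero (F.obj M) := by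
  have h := F.annihilator_le_annihilator_obj M
  rw [Module.annihilator_eq_top_iff.mpr inferInstance, top_le_iff,
    Module.annihilator_eq_top_iff] at h
  exact ModuleCat.isZero_of_subsingleton _

namespace IsHalfExact

variable {A : Type} [CommRing A] {F : ModuleCat A ⥤ ModuleCat A}

theorem isZero_obj_of_exact (hF : IsHalfExact F) {X Y Z : ModuleCat A} (f : X ⟶ Y) (g : Y ⟶ Z)
    (hf : Function.Injective f) (hg : Function.Surjective g) (hfg : Function.Exact f g)
    (hX : IsZero (F.obj X)) (hZ : IsZero (F.obj Z)) : IsZero (F.obj Y) := by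
  rw [ModuleCat.isZero_iff_subsingleton] at hX hZ ⊢
  refine subsingleton_of_forall_eq 0 fun y => ?_
  obtain ⟨x, rfl⟩ := (hF X Y Z f g hf hg hfg y).mp (Subsingleton.elim _ _)
  rw [Subsingleton.elim x 0, map_zero]

theorem surjective_map_of_exact (hF : IsHalfExact F) {X Y Z : ModuleCat A} (f : X ⟶ Y)
    (g : Y ⟶ Z) (hf : Function.Injective f) (hg : Function.Surjective g)
    (hfg : Function.Exact f g) (hZ : IsZero (F.obj Z)) : Function.Surjective (F.map f) := by
  rw [ModuleCat.isZero_iff_subsingleton] at hZ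
  exact fun y => (hF X Y Z f g hf hg hfg y).mp (Subsingleton.elim _ _)

variable [F.Linear A]

theorem isZero_obj_of_le_annihilator [IsNoetherianRing A] (hF : IsHalfExact F) (I : Ideal A)
    (hI : ∀ q : Ideal A, q.IsPrime → I ≤ q → IsZero (F.obj (ModuleCat.of A (A ⧸ q))))
    (M : Type) [AddCommGroup M] [Module A M] [Module.Finite A M]
    (hM : I ≤ Module.annihilator A M) : IsZero (F.obj (ModuleCat.of A M)) := by
  induction ‹Module.Finite A M› using
    IsNoetherianRing.induction_on_isQuotientEquivQuotientPrime A with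
  | subsingleton N => exact F.isZero_obj_of_subsingleton (ModuleCat.of A N)
  | quotient N q e =>
    rw [e.annihilator_eq, Ideal.annihilator_quotient] at hM
    exact (hI q.1 q.2 hM).of_iso (F.mapIso e.toModuleIso)
  | exact N₁ N₂ N₃ f g hf hg hfg h₁ h₃ =>
    exact hF.isZero_obj_of_exact (ModuleCat.ofHom f) (ModuleCat.ofHom g) hf hg hfg
      (h₁ (hM.trans (f.annihilator_le_of_injective hf)))
      (h₃ (hM.trans (g.annihilator_le_of_surjective hg)))

theorem isZero_obj_quotient_of_isPrime [IsNoetherianRing A] (hF : IsHalfExact F)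
    (hfin : ∀ M : ModuleCat A, Module.Finite A M → Module.Finite A (F.obj M))
    (hmax : ∀ m : Ideal A, m.IsMaximal → IsZero (F.obj (ModuleCat.of A (A ⧸ m))))
    (p : Ideal A) (hp : p.IsPrime) : IsZero (F.obj (ModuleCat.of A (A ⧸ p))) := by
  induction p using WellFoundedGT.induction with
  | _ p IH =>
  by_cases hpm : p.IsMaximal
  · exact hmax p hpm
  set B := ModuleCat.of A (A ⧸ p)
  rw [ModuleCat.isZero_iff_subsingleton, ← not_nontrivial_iff_subsingleton]
  intro hB
  have := hfin B inferInstance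
  obtain ⟨m, hm, hann⟩ := Ideal.exists_le_maximal _
    ((Module.annihilator_eq_top_iff (R := A)).not.mpr (not_subsingleton (F.obj B)))
  have hpann : p ≤ Module.annihilator A (F.obj B) := by
    simpa only [B, Ideal.annihilator_quotient] using F.annihilator_le_annihilator_obj B
  obtain ⟨t, htm, htp⟩ := SetLike.exists_of_lt
    ((hpann.trans hann).lt_of_ne fun h => hpm (h ▸ hm))
  let μ : B ⟶ B := t • 𝟙 B
  have hμ : Function.Injective μ :=
    (isSMulRegular_quotient_iff_mem_of_smul_mem p t).mpr
      fun x hx => (hp.mem_or_mem hx).resolve_left htp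
  let C := ModuleCat.of A (B ⧸ LinearMap.range μ.hom)
  have hC : IsZero (F.obj C) := by
    refine hF.isZero_obj_of_le_annihilator (p ⊔ Ideal.span {t}) (fun q hq hle => ?_) _ ?_
    · have htq : t ∈ q := hle (Ideal.mem_sup_right (Ideal.mem_span_singleton_self t))
      exact IH q ((le_sup_left.trans hle).lt_of_ne fun h => htp (h ▸ htq)) hq
    · have h := Module.annihilator_sup_span_singleton_le_annihilator_quotient_range (M := A ⧸ p) t
      rw [Ideal.annihilator_quotient] at h
      exact h
  have hsurj : Function.Surjective (F.map μ) :=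
    hF.surjective_map_of_exact μ (ModuleCat.ofHom (LinearMap.range μ.hom).mkQ) hμ
      (Submodule.mkQ_surjective _) (LinearMap.exact_map_mkQ_range _) hC
  rw [F.map_smul, F.map_id] at hsurj
  have htop := Module.annihilator_sup_span_singleton_eq_top_of_surjective_smul hsurj
  exact hm.ne_top (top_le_iff.mp
    (htop ▸ sup_le hann ((Ideal.span_singleton_le_iff_mem _).mpr htm)))

end IsHalfExact

theorem CategoryTheory.Functor.isZero_obj_of_forall_finite {A : Type u} [CommRing A]
    {C : Type*} [Category C] [HasZeroMorphisms C] [HasZeroObject C]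
    (F : ModuleCat.{v} A ⥤ C) [PreservesFilteredColimitsOfSize.{v, v} F]
    (hF : ∀ N : ModuleCat.{v} A, Module.Finite A N → IsZero (F.obj N)) (M : ModuleCat.{v} A) :
    IsZero (F.obj M) := by
  classical
  have : Nonempty {N : Submodule A M // N.FG} := ⟨⟨⊥, Submodule.fg_bot⟩⟩
  have hc := isColimitOfPreserves F (ModuleCat.directLimitIsColimit _ (Module.fgSystem A M))
  have hpt := hc.isZero_pt (Functor.isZero _ fun N => hF _ (Module.Finite.iff_fg.mpr N.2))
  exact hpt.of_iso (F.mapIso (Module.fgSystem.equiv A M).toModuleIso.symm)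

theorem statement_5_general {A : Type} [CommRing A] [IsNoetherianRing A]
    (F : ModuleCat A ⥤ ModuleCat A) [F.Linear A]
    [PreservesFilteredColimits F]
    (hhe : IsHalfExact F)
    (hbdd : ∀ M : ModuleCat A, Module.Finite A M → Module.Finite A (F.obj M))
    (hres : ∀ m : Ideal A, m.IsMaximal → Subsingleton (F.obj (ModuleCat.of A (A ⧸ m)))) :
    ∀ M : ModuleCat A, Subsingleton (F.obj M) := by
  have hprime (p : Ideal A) (hp : p.IsPrime) : IsZero (F.obj (ModuleCat.of A (A ⧸ p))) :=
    hhe.isZero_obj_quotient_of_isPrime hbdd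
      (fun m hm => ModuleCat.isZero_iff_subsingleton.mpr (hres m hm)) p hp
  have hfinite (N : ModuleCat A) (hN : Module.Finite A N) : IsZero (F.obj N) :=
    hhe.isZero_obj_of_le_annihilator ⊥ (fun q hq _ => hprime q hq) N bot_le
  have := preservesSmallestFilteredColimits_of_preservesFilteredColimits F
  intro M
  rw [← ModuleCat.isZero_iff_subsingleton]
  exact F.isZero_obj_of_forall_finite hfinite M

theorem statement_5 {A : Type} [CommRing A] [IsNoetherianRing A]
    (F : ModuleCat A ⥤ ModuleCat A) [F.Additive] [F.Linear A]
    [PreservesFilteredColimits F]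
    (hhe : IsHalfExact F)
    (hbdd : ∀ M : ModuleCat A, Module.Finite A M → Module.Finite A (F.obj M))
    (hres : ∀ m : Ideal A, m.IsMaximal → Subsingleton (F.obj (ModuleCat.of A (A ⧸ m)))) :
    ∀ M : ModuleCat A, Subsingleton (F.obj M) :=
  statement_5_general F hhe hbdd hres
end

section
/- Let A be a noetherian ring and consider an exact sequence of additive functors H_1 → H_2 → H_3 → H_4 from Mod_A to Ab (exact means pointwise exact on every A-module). Suppose A is an integral domain. If H_1 and H_3 are GS (generically surjective: there is a dense open U ⊆ Spec A such that H_i(A) ⊗_A κ(u) → H_i(κ(u)) is surjective for all finite type points u ∈ U), H_4 is GI (generically injective) and weakly bounded, and all functors commute with filtered colimits, then H_2 is GS. -/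
/-!
Let `C ⊆ H₄(A)` be the image of `γ`. As `H₄(A)` is finite over the noetherian domain `A`,
generic freeness makes `H₄(A)/C` free at every point of a dense open set. At such a point `u`,
`C ⊗ κ(u) → H₄(A) ⊗ κ(u)` stays injective, so `H₂(A) ⊗ κ(u) → H₃(A) ⊗ κ(u) → H₄(A) ⊗ κ(u)` is
exact, and the four lemma for the comparison maps `Hᵢ(A) ⊗ κ(u) → Hᵢ(κ(u))` shows that the
one for `H₂` is surjective.
-/

open CategoryTheory TensorProduct Limits

noncomputable def natMap {A : Type} [CommRing A]
    (F : ModuleCat A ⥤ ModuleCat A) [F.Additive] [F.Linear A]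
    (L : Type) [AddCommGroup L] [Module A L] :
    TensorProduct A (F.obj (ModuleCat.of A A)) L →ₗ[A] F.obj (ModuleCat.of A L) :=
  TensorProduct.lift ((ModuleCat.homLinearEquiv (S := A)).toLinearMap.comp
      ((Functor.mapLinearMap (R := A) (F := F)
      (X := ModuleCat.of A A) (Y := ModuleCat.of A L)).comp
      ((ModuleCat.homLinearEquiv (S := A)).symm.toLinearMap.comp
      (LinearMap.ringLmapEquivSelf A A L).symm.toLinearMap))).flip

def IsFiniteTypePoint {A : Type} [CommRing A] (u : PrimeSpectrum A) : Prop :=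
  Algebra.FiniteType A (FractionRing (A ⧸ u.asIdeal))

/-- Generically injective. -/
def IsGI {A : Type} [CommRing A]
    (F : ModuleCat A ⥤ ModuleCat A) [F.Additive] [F.Linear A] : Prop :=
  ∃ U : Set (PrimeSpectrum A), IsOpen U ∧ Dense U ∧
    ∀ u ∈ U, IsFiniteTypePoint u →
      Function.Injective (natMap F (FractionRing (A ⧸ u.asIdeal)))

/-- Generically surjective. -/
def IsGS {A : Type} [CommRing A]
    (F : ModuleCat A ⥤ ModuleCat A) [F.Additive] [F.Linear A] : Prop :=
  ∃ U : Set (PrimeSpectrum A), IsOpen U ∧ Dense U ∧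
    ∀ u ∈ U, IsFiniteTypePoint u →
      Function.Surjective (natMap F (FractionRing (A ⧸ u.asIdeal)))

lemma LinearMap.rTensor_subtype_injective_of_mem_freeLocus {A M : Type*} [CommRing A]
    [AddCommGroup M] [Module A M] (C : Submodule A M) {u : PrimeSpectrum A}
    (hu : u ∈ Module.freeLocus A (M ⧸ C)) (L : Type*) [AddCommGroup L] [Module A L]
    [Module (Localization.AtPrime u.asIdeal) L]
    [IsScalarTower A (Localization.AtPrime u.asIdeal) L] :
    Function.Injective (C.subtype.rTensor L) := by
  set S := Localization.AtPrime u.asIdeal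
  have : Module.Free S (S ⊗[A] (M ⧸ C)) := (Module.mem_freeLocus_iff_tensor u S).mp hu
  have hinj : Function.Injective ((AlgebraTensorModule.lTensor S S C.subtype).lTensor L) :=
    LinearMap.lTensor_injective_of_exact_of_flat (R := S) (AlgebraTensorModule.lTensor S S C.mkQ)
      (C.mkQ.lTensor_surjective S C.mkQ_surjective) _
      (Module.Flat.lTensor_preserves_injective_linearMap _ C.injective_subtype)
      (lTensor_exact S (LinearMap.exact_subtype_mkQ C) C.mkQ_surjective) L
  have hcomm := congrArg DFunLike.coe
    (AlgebraTensorModule.lTensor_comp_cancelBaseChange A S S (M := L) C.subtype)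
  simp only [LinearMap.coe_comp, LinearEquiv.coe_coe, AlgebraTensorModule.coe_lTensor] at hcomm
  -- `L ⊗[A] -` is `L ⊗[S] (S ⊗[A] -)`
  rw [← LinearMap.lTensor_inj_iff_rTensor_inj,
    ← EquivLike.injective_comp (AlgebraTensorModule.cancelBaseChange A S S L C), hcomm]
  exact (AlgebraTensorModule.cancelBaseChange A S S L M).injective.comp hinj

lemma Ideal.isUnit_algebraMap_fractionRing_quotient {A : Type*} [CommRing A] (p : Ideal A)
    [p.IsPrime] (s : p.primeCompl) : IsUnit (algebraMap A (FractionRing (A ⧸ p)) s) := by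
  rw [IsScalarTower.algebraMap_apply A (A ⧸ p), isUnit_iff_ne_zero, ne_eq,
    IsFractionRing.to_map_eq_zero_iff, Ideal.Quotient.algebraMap_eq,
    Ideal.Quotient.eq_zero_iff_mem]
  exact s.2

lemma LinearMap.rTensor_subtype_fractionRing_quotient_injective_of_mem_freeLocus
    {A M : Type*} [CommRing A] [AddCommGroup M] [Module A M] (C : Submodule A M)
    {u : PrimeSpectrum A} (hu : u ∈ Module.freeLocus A (M ⧸ C)) :
    Function.Injective (C.subtype.rTensor (FractionRing (A ⧸ u.asIdeal))) := by
  let : Algebra (Localization.AtPrime u.asIdeal) (FractionRing (A ⧸ u.asIdeal)) :=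
    (IsLocalization.lift (M := u.asIdeal.primeCompl)
      u.asIdeal.isUnit_algebraMap_fractionRing_quotient).toAlgebra
  have : IsScalarTower A (Localization.AtPrime u.asIdeal) (FractionRing (A ⧸ u.asIdeal)) :=
    .of_algebraMap_eq' (IsLocalization.lift_comp _).symm
  exact LinearMap.rTensor_subtype_injective_of_mem_freeLocus C hu _

lemma Module.dense_freeLocus {A Q : Type*} [CommRing A] [IsDomain A] [AddCommGroup Q]
    [Module A Q] [Module.FinitePresentation A Q] : Dense (Module.freeLocus A Q) := by
  have : IsLocalization.AtPrime (FractionRing A) (⊥ : Ideal A) := by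
    simpa [IsLocalization.AtPrime, Ideal.primeCompl_bot] using
      (inferInstance : IsFractionRing A (FractionRing A))
  refine Module.isOpen_freeLocus.dense ⟨⟨⊥, Ideal.isPrime_bot⟩, ?_⟩
  exact (Module.mem_freeLocus_iff_tensor _ (FractionRing A)).mpr inferInstance

section FourLemma

variable {A : Type} [CommRing A]

lemma natMap_naturality {F G : ModuleCat A ⥤ ModuleCat A} [F.Additive] [F.Linear A]
    [G.Additive] [G.Linear A] (τ : F ⟶ G) (L : Type) [AddCommGroup L] [Module A L]
    (z : F.obj (ModuleCat.of A A) ⊗[A] L) :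
    τ.app (ModuleCat.of A L) (natMap F L z) =
      natMap G L ((τ.app (ModuleCat.of A A)).hom.rTensor L z) := by
  induction z using TensorProduct.induction_on with
  | zero => simp
  | tmul x l =>
    exact ConcreteCategory.congr_hom (τ.naturality (ModuleCat.ofHom
      ((LinearMap.ringLmapEquivSelf A A L).symm l))) x
  | add a b ha hb => simp only [map_add, ha, hb]

variable {H₁ H₂ H₃ H₄ : ModuleCat A ⥤ ModuleCat A}
  [H₁.Additive] [H₁.Linear A] [H₂.Additive] [H₂.Linear A]
  [H₃.Additive] [H₃.Linear A] [H₄.Additive] [H₄.Linear A]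
  {α : H₁ ⟶ H₂} {β : H₂ ⟶ H₃} {γ : H₃ ⟶ H₄}

/-- `hγ` makes `Hᵢ(A) ⊗ L` exact at `H₃(A) ⊗ L`, which right exactness of `- ⊗ L` alone does
not give. -/
lemma natMap_surjective_of_exact
    (hexact : ∀ M : ModuleCat A,
      Function.Exact (α.app M) (β.app M) ∧ Function.Exact (β.app M) (γ.app M))
    (L : Type) [AddCommGroup L] [Module A L]
    (h₁ : Function.Surjective (natMap H₁ L)) (h₃ : Function.Surjective (natMap H₃ L))
    (h₄ : Function.Injective (natMap H₄ L))
    (hγ : Function.Injective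
      ((LinearMap.range (γ.app (ModuleCat.of A A)).hom).subtype.rTensor L)) :
    Function.Surjective (natMap H₂ L) := by
  set γA := (γ.app (ModuleCat.of A A)).hom
  intro y
  obtain ⟨x₃, hx₃⟩ := h₃ (β.app _ y)
  have hγx₃ : γA.rTensor L x₃ = 0 := h₄ <| by
    rw [← natMap_naturality, hx₃, map_zero]
    exact (hexact _).2.apply_apply_eq_zero y
  have hx₃' : γA.rangeRestrict.rTensor L x₃ = 0 := hγ <| by
    rw [map_zero, ← LinearMap.rTensor_comp_apply]
    exact hγx₃
  have hβγ : Function.Exact (β.app (ModuleCat.of A A)).hom γA.rangeRestrict := by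
    rw [LinearMap.exact_iff, LinearMap.ker_rangeRestrict]
    exact LinearMap.exact_iff.mp (hexact _).2
  obtain ⟨x₂, hx₂⟩ := (rTensor_exact L hβγ γA.surjective_rangeRestrict x₃).mp hx₃'
  obtain ⟨z₁, hz₁⟩ := ((hexact _).1 (natMap H₂ L x₂ - y)).mp <| by
    rw [map_sub, natMap_naturality, hx₂, hx₃, sub_self]
  obtain ⟨x₁, rfl⟩ := h₁ z₁
  refine ⟨x₂ - (α.app (ModuleCat.of A A)).hom.rTensor L x₁, ?_⟩
  rw [map_sub, ← natMap_naturality, hz₁, sub_sub_cancel]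

end FourLemma

theorem statement_9_general {A : Type} [CommRing A] [IsNoetherianRing A] [IsDomain A]
    (H₁ H₂ H₃ H₄ : ModuleCat A ⥤ ModuleCat A)
    [H₁.Additive] [H₁.Linear A] [H₂.Additive] [H₂.Linear A]
    [H₃.Additive] [H₃.Linear A] [H₄.Additive] [H₄.Linear A]
    (α : H₁ ⟶ H₂) (β : H₂ ⟶ H₃) (γ : H₃ ⟶ H₄)
    (hexact : ∀ M : ModuleCat A,
      Function.Exact (α.app M) (β.app M) ∧ Function.Exact (β.app M) (γ.app M))
    (h1 : IsGS H₁) (h3 : IsGS H₃) (h4 : IsGI H₄)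
    (h4wb : ∀ p : Ideal A, p.IsPrime →
      Module.Finite A (H₄.obj (ModuleCat.of A (A ⧸ p)))) :
    IsGS H₂ := by
  obtain ⟨U₁, hU₁o, hU₁d, hU₁⟩ := h1
  obtain ⟨U₃, hU₃o, hU₃d, hU₃⟩ := h3
  obtain ⟨U₄, hU₄o, hU₄d, hU₄⟩ := h4
  have := h4wb ⊥ Ideal.isPrime_bot
  have : Module.Finite A (H₄.obj (ModuleCat.of A A)) :=
    .equiv (H₄.mapIso (Submodule.quotEquivOfEqBot ⊥ rfl).toModuleIso).toLinearEquiv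
  set C := LinearMap.range (γ.app (ModuleCat.of A A)).hom
  have : Module.FinitePresentation A (H₄.obj (ModuleCat.of A A) ⧸ C) :=
    Module.finitePresentation_of_finite _ _
  refine ⟨U₁ ∩ (U₃ ∩ (U₄ ∩ Module.freeLocus A (H₄.obj (ModuleCat.of A A) ⧸ C))),
    hU₁o.inter (hU₃o.inter (hU₄o.inter Module.isOpen_freeLocus)),
    hU₁d.inter_of_isOpen_left (hU₃d.inter_of_isOpen_left
      (hU₄d.inter_of_isOpen_left Module.dense_freeLocus hU₄o) hU₃o) hU₁o, ?_⟩
  rintro u ⟨hu₁, hu₃, hu₄, hu⟩ hft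
  exact natMap_surjective_of_exact hexact _ (hU₁ u hu₁ hft) (hU₃ u hu₃ hft) (hU₄ u hu₄ hft)
    (LinearMap.rTensor_subtype_fractionRing_quotient_injective_of_mem_freeLocus C hu)

theorem statement_9 {A : Type} [CommRing A] [IsNoetherianRing A] [IsDomain A]
    (H₁ H₂ H₃ H₄ : ModuleCat A ⥤ ModuleCat A)
    [H₁.Additive] [H₁.Linear A] [H₂.Additive] [H₂.Linear A]
    [H₃.Additive] [H₃.Linear A] [H₄.Additive] [H₄.Linear A]
    [PreservesFilteredColimits H₁] [PreservesFilteredColimits H₂]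
    [PreservesFilteredColimits H₃] [PreservesFilteredColimits H₄]
    (α : H₁ ⟶ H₂) (β : H₂ ⟶ H₃) (γ : H₃ ⟶ H₄)
    (hexact : ∀ M : ModuleCat A,
      Function.Exact (α.app M) (β.app M) ∧ Function.Exact (β.app M) (γ.app M))
    (h1 : IsGS H₁) (h3 : IsGS H₃) (h4 : IsGI H₄)
    (h4wb : ∀ p : Ideal A, p.IsPrime →
      Module.Finite A (H₄.obj (ModuleCat.of A (A ⧸ p)))) :
    IsGS H₂ :=
  statement_9_general H₁ H₂ H₃ H₄ α β γ hexact h1 h3 h4 h4wb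
end

section
/- Let B' be a local artinian ring with residue field k_{B'}, and let K/k_{B'} be a finite (resp. finite separable) field extension. Then there exists a local artinian ring B̃' and a finite flat (resp. finite étale) ring extension B' → B̃' such that the residue field of B̃' equals K. -/
/-!
Lift the minimal polynomial `f` of some `α ∈ K` to a monic `q ∈ B'[X]`. Then `C = B'[X]/(q)`
is free of rank `deg q` over `B'`, and `C/𝔪C ≅ k[X]/(f)` is a field. Since `C` is integral
over `B'`, every maximal ideal of `C` contracts to `𝔪`, hence contains `𝔪C`; so `C` is local
with maximal ideal `𝔪C` and residue field `k(α)`. If `K/k` is separable, take `α` primitive: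
then `𝔪C = 𝔪_C` and the separability of the residue field extension make `C` unramified over
`B'`. In general, iterate: `C` is again local artinian, `[K : k(α)] < [K : k]` as soon as
`α ∉ k`, and finite flat extensions compose.
-/

open IsLocalRing

/-- A finite flat local artinian extension of `B'` realizing the residue field
extension `K` of `ResidueField B'`. -/
structure FiniteFlatResidueLift (B' : Type) [CommRing B'] [IsLocalRing B']
    [IsArtinianRing B'] (K : Type) [Field K] [Algebra (ResidueField B') K] where
  C : Type
  [commRing : CommRing C]
  [alg : Algebra B' C]
  [isLocal : IsLocalRing C]
  [isArtinian : IsArtinianRing C]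
  [finite : Module.Finite B' C]
  [flat : Module.Flat B' C]
  [localHom : IsLocalHom (algebraMap B' C)]
  residue_eq : ∃ e : ResidueField C ≃+* K,
    (e : ResidueField C →+* K).comp (ResidueField.map (algebraMap B' C)) =
      algebraMap (ResidueField B') K

/-- A finite étale such extension: additionally formally unramified. -/
structure FiniteEtaleResidueLift (B' : Type) [CommRing B'] [IsLocalRing B']
    [IsArtinianRing B'] (K : Type) [Field K] [Algebra (ResidueField B') K]
    extends FiniteFlatResidueLift B' K where
  unramified : Algebra.FormallyUnramified B' C

open Polynomial

theorem IsLocalRing.of_isMaximal_map_maximalIdeal {R S : Type*} [CommRing R] [IsLocalRing R]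
    [CommRing S] [Algebra R S] [Algebra.IsIntegral R S]
    (h : ((maximalIdeal R).map (algebraMap R S)).IsMaximal) : IsLocalRing S := by
  refine .of_unique_max_ideal ⟨_, h, fun M hM => ?_⟩
  have hcomap : M.comap (algebraMap R S) = maximalIdeal R :=
    eq_maximalIdeal (Ideal.isMaximal_comap_of_isIntegral_of_isMaximal M)
  exact (h.eq_of_le hM.ne_top (Ideal.map_le_iff_le_comap.2 hcomap.ge)).symm

theorem Polynomial.Monic.exists_monic_map_eq {R S : Type*} [CommRing R] [CommRing S]
    {f : R →+* S} (hf : Function.Surjective f) {p : S[X]} (hp : p.Monic) :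
    ∃ q : R[X], q.map f = p ∧ q.Monic := by
  obtain ⟨q, hq, -, hqm⟩ := lifts_and_natDegree_eq_and_monic (mem_lifts_of_surjective hf p) hp
  exact ⟨q, hq, hqm⟩

namespace AdjoinRoot

variable {R : Type*} [CommRing R] (q : R[X])

instance [Fact q.Monic] : Module.Finite R (AdjoinRoot q) := (Fact.out : q.Monic).finite_adjoinRoot

instance [Fact q.Monic] : Module.Free R (AdjoinRoot q) := (Fact.out : q.Monic).free_adjoinRoot

instance [IsArtinianRing R] [Fact q.Monic] : IsArtinianRing (AdjoinRoot q) := .of_finite R _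

variable [IsLocalRing R] [Fact (Irreducible (q.map (residue R)))]

theorem isMaximal_map_maximalIdeal :
    ((maximalIdeal R).map (algebraMap R (AdjoinRoot q))).IsMaximal := by
  rw [Ideal.Quotient.maximal_ideal_iff_isField_quotient]
  exact (quotAdjoinRootEquivQuotPolynomialQuot (maximalIdeal R) q).toMulEquiv.isField
    (Field.toIsField (AdjoinRoot (q.map (residue R))))

variable [Fact q.Monic]

instance : IsLocalRing (AdjoinRoot q) :=
  .of_isMaximal_map_maximalIdeal (isMaximal_map_maximalIdeal q)

theorem map_maximalIdeal :
    (maximalIdeal R).map (algebraMap R (AdjoinRoot q)) = maximalIdeal (AdjoinRoot q) :=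
  eq_maximalIdeal (isMaximal_map_maximalIdeal q)

instance : IsLocalHom (algebraMap R (AdjoinRoot q)) :=
  ((local_hom_TFAE _).out 0 2).mpr (map_maximalIdeal q).le

noncomputable def residueFieldAlgEquiv :
    ResidueField (AdjoinRoot q) ≃ₐ[ResidueField R] AdjoinRoot (q.map (residue R)) :=
  AlgEquiv.ofRingEquiv (f := (Ideal.quotEquivOfEq (map_maximalIdeal q).symm).trans
      (quotAdjoinRootEquivQuotPolynomialQuot (maximalIdeal R) q)) fun x => by
    obtain ⟨b, rfl⟩ := residue_surjective x
    simp only [algebraMap_eq, ResidueField.algebraMap_residue]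
    exact congrArg (mk _) (map_C _)

end AdjoinRoot

namespace FiniteFlatResidueLift

variable {B' : Type} [CommRing B'] [IsLocalRing B'] [IsArtinianRing B']
  {K : Type} [Field K] [Algebra (ResidueField B') K]

def ofAlgEquiv (C : Type) [CommRing C] [Algebra B' C] [IsLocalRing C] [IsArtinianRing C]
    [Module.Finite B' C] [Module.Flat B' C] [IsLocalHom (algebraMap B' C)]
    (e : ResidueField C ≃ₐ[ResidueField B'] K) : FiniteFlatResidueLift B' K where
  C := C
  residue_eq := ⟨e, RingHom.ext e.commutes⟩

def comp {C : Type} [CommRing C] [Algebra B' C] [IsLocalRing C] [IsArtinianRing C]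
    [Module.Finite B' C] [Module.Flat B' C] [IsLocalHom (algebraMap B' C)]
    [Algebra (ResidueField C) K] [IsScalarTower (ResidueField B') (ResidueField C) K]
    (l : FiniteFlatResidueLift C K) : FiniteFlatResidueLift B' K :=
  letI := l.commRing
  letI := l.alg
  haveI := l.isLocal
  haveI := l.finite
  haveI := l.flat
  haveI := l.localHom
  letI : Algebra B' l.C := ((algebraMap C l.C).comp (algebraMap B' C)).toAlgebra
  haveI : IsScalarTower B' C l.C := .of_algebraMap_eq' rfl
  haveI : IsLocalHom (algebraMap B' l.C) :=
    inferInstanceAs (IsLocalHom ((algebraMap C l.C).comp (algebraMap B' C)))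
  { C := l.C
    isArtinian := l.isArtinian
    finite := .trans C l.C
    flat := .trans B' C l.C
    residue_eq := by
      obtain ⟨e, he⟩ := l.residue_eq
      refine ⟨e, ?_⟩
      have hmap : ResidueField.map (algebraMap B' l.C) =
          (ResidueField.map (algebraMap C l.C)).comp (ResidueField.map (algebraMap B' C)) :=
        ResidueField.map_comp _ _
      rw [hmap, ← RingHom.comp_assoc, he,
        IsScalarTower.algebraMap_eq (ResidueField B') (ResidueField C) K]
      rfl }

end FiniteFlatResidueLift

def FiniteEtaleResidueLift.ofAlgEquiv {B' : Type} [CommRing B'] [IsLocalRing B']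
    [IsArtinianRing B'] {K : Type} [Field K] [Algebra (ResidueField B') K]
    [Algebra.IsSeparable (ResidueField B') K]
    (C : Type) [CommRing C] [Algebra B' C] [IsLocalRing C] [IsArtinianRing C]
    [Module.Finite B' C] [Module.Flat B' C] [IsLocalHom (algebraMap B' C)]
    (hm : (maximalIdeal B').map (algebraMap B' C) = maximalIdeal C)
    (e : ResidueField C ≃ₐ[ResidueField B'] K) : FiniteEtaleResidueLift B' K where
  toFiniteFlatResidueLift := .ofAlgEquiv C e
  unramified :=
    have := AlgEquiv.Algebra.isSeparable e.symm
    show Algebra.FormallyUnramified B' C from .of_map_maximalIdeal hm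

theorem FiniteEtaleResidueLift.nonempty (B' : Type) [CommRing B'] [IsLocalRing B']
    [IsArtinianRing B'] (K : Type) [Field K] [Algebra (ResidueField B') K]
    [FiniteDimensional (ResidueField B') K] [Algebra.IsSeparable (ResidueField B') K] :
    Nonempty (FiniteEtaleResidueLift B' K) := by
  let pb := Field.powerBasisOfFiniteOfSeparable (ResidueField B') K
  obtain ⟨q, hqf, hq⟩ :=
    (minpoly.monic pb.isIntegral_gen).exists_monic_map_eq (residue_surjective (R := B'))
  have : Fact q.Monic := ⟨hq⟩
  have : Fact (Irreducible (q.map (residue B'))) :=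
    ⟨hqf ▸ minpoly.irreducible pb.isIntegral_gen⟩
  have h₁ : aeval (AdjoinRoot.root (q.map (residue B')))
      (minpoly (ResidueField B') pb.gen) = 0 := by
    rw [← hqf, AdjoinRoot.aeval_eq, AdjoinRoot.mk_self]
  have h₂ : aeval pb.gen (q.map (residue B')) = 0 := hqf ▸ minpoly.aeval _ _
  exact ⟨.ofAlgEquiv (AdjoinRoot q) (AdjoinRoot.map_maximalIdeal q)
    ((AdjoinRoot.residueFieldAlgEquiv q).trans (AdjoinRoot.equiv' _ pb h₁ h₂))⟩

theorem FiniteFlatResidueLift.nonempty (B' : Type) [CommRing B'] [IsLocalRing B']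
    [IsArtinianRing B'] (K : Type) [Field K] [Algebra (ResidueField B') K]
    [FiniteDimensional (ResidueField B') K] : Nonempty (FiniteFlatResidueLift B' K) := by
  induction hn : Module.finrank (ResidueField B') K using Nat.strong_induction_on
    generalizing B' K with
  | _ n ih =>
  by_cases hK : ∀ α : K, α ∈ (algebraMap (ResidueField B') K).range
  · have : Algebra.IsSeparable (ResidueField B') K := ⟨fun α => by
      obtain ⟨c, rfl⟩ := hK α
      exact isSeparable_algebraMap c⟩
    exact (FiniteEtaleResidueLift.nonempty B' K).map (·.toFiniteFlatResidueLift)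
  push Not at hK
  obtain ⟨α, hα⟩ := hK
  have hint : IsIntegral (ResidueField B') α := .of_finite _ α
  obtain ⟨q, hqf, hq⟩ := (minpoly.monic hint).exists_monic_map_eq (residue_surjective (R := B'))
  have : Fact q.Monic := ⟨hq⟩
  have : Fact (Irreducible (q.map (residue B'))) := ⟨hqf ▸ minpoly.irreducible hint⟩
  let φ : AdjoinRoot (q.map (residue B')) →ₐ[ResidueField B'] K :=
    AdjoinRoot.liftAlgHom _ (Algebra.ofId _ _) α (by rw [hqf]; exact minpoly.aeval _ α)
  let ψ := φ.comp (AdjoinRoot.residueFieldAlgEquiv q).toAlgHom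
  let : Algebra (ResidueField (AdjoinRoot q)) K := ψ.toRingHom.toAlgebra
  have : IsScalarTower (ResidueField B') (ResidueField (AdjoinRoot q)) K := .of_algHom ψ
  have : FiniteDimensional (ResidueField (AdjoinRoot q)) K := .right (ResidueField B') _ K
  have hdeg : 2 ≤ Module.finrank (ResidueField B') (ResidueField (AdjoinRoot q)) := by
    rw [(AdjoinRoot.residueFieldAlgEquiv q).toLinearEquiv.finrank_eq,
      (AdjoinRoot.powerBasis (hq.map _).ne_zero).finrank, AdjoinRoot.powerBasis_dim, hqf]
    exact (minpoly.two_le_natDegree_iff hint).2 hα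
  have hlt : Module.finrank (ResidueField (AdjoinRoot q)) K < n := by
    rw [← hn, ← Module.finrank_mul_finrank (ResidueField B') (ResidueField (AdjoinRoot q)) K]
    exact lt_mul_left Module.finrank_pos hdeg
  obtain ⟨l⟩ := ih _ hlt (AdjoinRoot q) K rfl
  exact ⟨l.comp⟩

theorem statement_14 (B' : Type) [CommRing B'] [IsLocalRing B'] [IsArtinianRing B']
    (K : Type) [Field K] [Algebra (ResidueField B') K]
    [FiniteDimensional (ResidueField B') K] :
    Nonempty (FiniteFlatResidueLift B' K) ∧
      (Algebra.IsSeparable (ResidueField B') K →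
        Nonempty (FiniteEtaleResidueLift B' K)) :=
  ⟨FiniteFlatResidueLift.nonempty B' K, fun _ => FiniteEtaleResidueLift.nonempty B' K⟩
end

section
/- Let S be a Jacobson scheme and T an S-scheme locally of finite type. Then T is Jacobson, and every point t ∈ |T| of finite type (i.e., such that Spec κ(t) → T is of finite type) is a closed point of T. Conversely, in any scheme locally of finite type over a Jacobson scheme, the finite type points are exactly the closed points and they are dense in every closed subset. -/
open CategoryTheory AlgebraicGeometry

theorem statement_16 {S T : Scheme} (f : T ⟶ S) [LocallyOfFiniteType f]
    [JacobsonSpace S] :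
    JacobsonSpace T ∧
    (∀ t : T, LocallyOfFiniteType (T.fromSpecResidueField t) ↔ IsClosed ({t} : Set T)) ∧
    (∀ Z : Set T, IsClosed Z → Z ⊆ closure {t ∈ Z | IsClosed ({t} : Set T)}) := by
  have : JacobsonSpace T := LocallyOfFiniteType.jacobsonSpace f
  exact ⟨this, fun _ ↦ isClosed_singleton_iff_locallyOfFiniteType.symm,
    fun _ hZ ↦ (closure_inter_closedPoints hZ).superset⟩
end

section
/- Let B = k[x], A = k[x, x⁻¹], and A' = k[x, x⁻¹, y]/(y²) over a field k, with the obvious maps B → A (localization) and A' → A (setting y = 0, a square-zero surjection). Then the fiber product ring B' = B ×_A A' is isomorphic to k[x, y, yx⁻¹, yx⁻², …]/(y, yx⁻¹, yx⁻², …)², and B' is not a finitely generated k-algebra. -/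
/-!
A point of `B ×_A (A ⊕ Aε)` is a pair `(b, (a, m))` with `a` the image of `b`, so it is determined
by `(b, m)`: the fiber product is the trivial square-zero extension `k[x] ⊕ k[x, x⁻¹]`. Generators
of such an extension as a `k`-algebra give, through their second components, generators of
`k[x, x⁻¹]` as a `k[x]`-module, because the second component of a product is a `k[x]`-combination
of second components. But finitely many elements of `k[x, x⁻¹]` have a common denominator `x ^ N`,
and the submodule they span misses `x ^ -(N + 1)`.
-/

namespace TrivSqZeroExt

section FiberProduct

variable (R B A : Type*) [CommSemiring R] [CommSemiring B] [CommSemiring A]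
  [Algebra R B] [Algebra R A] [Algebra B A] [IsScalarTower R B A]
  [Module Bᵐᵒᵖ A] [IsCentralScalar B A]

abbrev fiberProduct : Subalgebra R (B × TrivSqZeroExt A A) :=
  AlgHom.equalizer ((IsScalarTower.toAlgHom R B A).comp (AlgHom.fst R B (TrivSqZeroExt A A)))
    ((fstHom R A A).comp (AlgHom.snd R B (TrivSqZeroExt A A)))

noncomputable def toFiberProduct : TrivSqZeroExt B A →ₐ[R] B × TrivSqZeroExt A A :=
  (fstHom R B A).prod <|
    lift ((inlAlgHom R A A).comp (IsScalarTower.toAlgHom R B A)) ((inrHom A A).restrictScalars R)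
      (fun _ _ => inr_mul_inr A _ _)
      (fun b a => by
        change inr (b • a) = inl (algebraMap B A b) * inr a
        rw [inl_mul_inr, algebraMap_smul])
      (fun b a => by
        change inr (MulOpposite.op b • a) = inr a * inl (algebraMap B A b)
        rw [inr_mul_inl, op_smul_eq_smul, op_smul_eq_smul, algebraMap_smul])

theorem toFiberProduct_apply (t : TrivSqZeroExt B A) :
    toFiberProduct R B A t = (t.fst, (algebraMap B A t.fst, t.snd)) :=
  Prod.ext rfl (TrivSqZeroExt.ext (add_zero _) (zero_add _))

theorem toFiberProduct_injective : Function.Injective (toFiberProduct R B A) := by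
  intro t t' h
  rw [toFiberProduct_apply, toFiberProduct_apply] at h
  injection h with hfst h'
  injection h' with _ hsnd
  exact TrivSqZeroExt.ext hfst hsnd

theorem range_toFiberProduct : (toFiberProduct R B A).range = fiberProduct R B A := by
  ext ⟨b, a'⟩
  simp only [AlgHom.mem_range, toFiberProduct_apply]
  constructor
  · rintro ⟨t, ⟨⟩⟩
    rfl
  · intro h
    exact ⟨(b, a'.snd), Prod.ext rfl (TrivSqZeroExt.ext h rfl)⟩

noncomputable def equivFiberProduct : TrivSqZeroExt B A ≃ₐ[R] fiberProduct R B A :=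
  (AlgEquiv.ofInjective _ (toFiberProduct_injective R B A)).trans
    (Subalgebra.equivOfEq _ _ (range_toFiberProduct R B A))

end FiberProduct

section Finiteness

variable (R B M : Type*) [CommSemiring R] [CommSemiring B] [Algebra R B] [AddCommMonoid M]
  [Module R M] [Module B M] [Module Bᵐᵒᵖ M] [IsCentralScalar B M] [IsScalarTower R B M]

def subalgebraOfSubmodule (N : Submodule B M) : Subalgebra R (TrivSqZeroExt B M) where
  carrier := {t | t.snd ∈ N}
  mul_mem' {t u} ht hu := by
    change t.fst • u.snd + MulOpposite.op u.fst • t.snd ∈ N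
    rw [op_smul_eq_smul]
    exact N.add_mem (N.smul_mem _ hu) (N.smul_mem _ ht)
  add_mem' ht hu := N.add_mem ht hu
  algebraMap_mem' _ := N.zero_mem

@[simp]
theorem mem_subalgebraOfSubmodule {N : Submodule B M} {t : TrivSqZeroExt B M} :
    t ∈ subalgebraOfSubmodule R B M N ↔ t.snd ∈ N :=
  Iff.rfl

theorem moduleFinite_of_finiteType [hfin : Algebra.FiniteType R (TrivSqZeroExt B M)] :
    Module.Finite B M := by
  classical
  obtain ⟨s, hs⟩ := hfin.out
  refine ⟨⟨s.image snd, eq_top_iff.2 fun m _ => ?_⟩⟩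
  have hle : Algebra.adjoin R (s : Set (TrivSqZeroExt B M)) ≤
      subalgebraOfSubmodule R B M (Submodule.span B (s.image snd)) :=
    Algebra.adjoin_le fun t ht =>
      (mem_subalgebraOfSubmodule R B M).2 (Submodule.subset_span (Finset.mem_image_of_mem snd ht))
  rw [hs] at hle
  simpa using hle (Algebra.mem_top (x := inr m))

end Finiteness

end TrivSqZeroExt

theorem IsLocalization.Away.not_moduleFinite {R S : Type*} [CommRing R] [CommRing S] [Algebra R S]
    {x : R} [IsLocalization.Away x S] (hx : x ∈ nonZeroDivisors R) (hu : ¬IsUnit x) :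
    ¬Module.Finite R S := by
  intro hfin
  obtain ⟨s, hs⟩ := hfin.fg_top
  obtain ⟨⟨_, n, rfl⟩, hn⟩ := IsLocalization.exist_integer_multiples_of_finset (Submonoid.powers x) s
  have hle : Submodule.span R (s : Set S) ≤
      (1 : Submodule R S).comap (x ^ n • LinearMap.id) :=
    Submodule.span_le.2 fun a ha => Submodule.mem_one.2 (hn a ha)
  rw [hs] at hle
  obtain ⟨q, hq⟩ := hle (Submodule.mem_top (x := invSelf x ^ (n + 1)))
  rw [LinearMap.toSpanSingleton_apply, LinearMap.smul_apply, LinearMap.id_apply,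
    Algebra.smul_def, Algebra.smul_def, mul_one] at hq
  have hxq : algebraMap R S (x * q) = algebraMap R S 1 :=
    calc algebraMap R S (x * q) = (algebraMap R S x * invSelf x) ^ (n + 1) := by
          rw [map_mul, hq, map_pow]
          ring
      _ = algebraMap R S 1 := by rw [mul_invSelf, one_pow, map_one]
  exact hu (IsUnit.of_mul_eq_one q (IsLocalization.injective S (Submonoid.powers_le.2 hx) hxq))

theorem statement_18 (k : Type) [Field k] :
    let B := Polynomial k
    let A := Localization.Away (Polynomial.X : Polynomial k)
    let A' := TrivSqZeroExt A A
    let g : B →ₐ[k] A := IsScalarTower.toAlgHom k B A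
    let f : A' →ₐ[k] A := TrivSqZeroExt.fstHom k A A
    let B' : Subalgebra k (B × A') :=
      AlgHom.equalizer (g.comp (AlgHom.fst k B A')) (f.comp (AlgHom.snd k B A'))
    Nonempty (B' ≃ₐ[k] TrivSqZeroExt B A) ∧ ¬ Algebra.FiniteType k B' := by
  intro B A A' g f B'
  let e : TrivSqZeroExt B A ≃ₐ[k] B' := TrivSqZeroExt.equivFiberProduct k B A
  refine ⟨⟨e.symm⟩, fun hB' => ?_⟩
  have : Algebra.FiniteType k (TrivSqZeroExt B A) := hB'.equiv e.symm
  exact IsLocalization.Away.not_moduleFinite (S := A)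
    (mem_nonZeroDivisors_of_ne_zero Polynomial.X_ne_zero) Polynomial.not_isUnit_X
    (TrivSqZeroExt.moduleFinite_of_finiteType k B A)
end
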